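/- Fix n ∈ ℕ, α, β ∈ (0,1), and K ≥ 1. Let ‖·‖ be a K-tensor-symmetric norm on ℝⁿ ⊗ ℝⁿ ⊗ ℝⁿ. Suppose x = Σ_{i,j,k} a_{i,j,k} e_i ⊗ e_j ⊗ e_k is such that there exist permutations π, σ, τ ∈ S_n with |a_{π(i),σ(i),τ(i)}| ≥ α for all i ∈ {1,…,⌈βn⌉}. Then ‖x‖ ≥ (αβ/K) ‖Σ_{i=1}^n e_i ⊗ e_i ⊗ e_i‖. -/
import Mathlib


open Finset

/-- The sign `±1` associated to a Boolean. -/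
def sgn (b : Bool) : ℝ := if b then 1 else -1

/-- A tensor in `ℝⁿ ⊗ ℝⁿ ⊗ ℝⁿ`, identified with its coefficient array
`(a_{i,j,k})` in the standard basis `eᵢ ⊗ eⱼ ⊗ e_k`. -/
abbrev Tensor3 (n : ℕ) := Fin n → Fin n → Fin n → ℝ

/-- `N` is a norm on `ℝⁿ ⊗ ℝⁿ ⊗ ℝⁿ` (written in basis coordinates). -/
def IsTensorNorm {n : ℕ} (N : Tensor3 n → ℝ) : Prop :=
  (∀ c : ℝ, ∀ a, N (c • a) = |c| * N a) ∧
  (∀ a b, N (a + b) ≤ N a + N b) ∧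
  (∀ a, N a = 0 → a = 0)

/-- `N` is `K`-tensor-symmetric. -/
def IsTensorSymmetric {n : ℕ} (K : ℝ) (N : Tensor3 n → ℝ) : Prop :=
  ∀ (π σ τ : Equiv.Perm (Fin n)) (ε δ η : Fin n → Bool) (a : Tensor3 n),
    N (fun i j k => sgn (ε i) * sgn (δ j) * sgn (η k) * a (π i) (σ j) (τ k))
      ≤ K * N a

/-- The diagonal tensor `Σᵢ eᵢ ⊗ eᵢ ⊗ eᵢ`, in basis coordinates. -/
def diagTensor (n : ℕ) : Tensor3 n :=
  fun i j k => if i = j ∧ j = k then 1 else 0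

lemma sgn_mul_self (x : Bool) : sgn x * sgn x = 1 := by cases x <;> norm_num [sgn]

lemma sgn_beq (x y : Bool) : sgn (x == y) = sgn x * sgn y := by
  cases x <;> cases y <;> norm_num [sgn]

lemma sum_sgn_pair {n : ℕ} (i k : Fin n) :
    ∑ ε : Fin n → Bool, sgn (ε i) * sgn (ε k) = if i = k then (2:ℝ)^n else 0 := by
  split_ifs with h
  · subst h
    simp [sgn_mul_self]
  · have hgg : ∀ ε : Fin n → Bool,
        Function.update (Function.update ε i (!ε i)) i (!(Function.update ε i (!ε i)) i) = ε := by
      intro ε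
      funext l
      by_cases hl : l = i
      · subst hl; simp
      · simp [Function.update_of_ne hl]
    set e : (Fin n → Bool) ≃ (Fin n → Bool) :=
      ⟨fun ε => Function.update ε i (!ε i), fun ε => Function.update ε i (!ε i),
        fun ε => hgg ε, fun ε => hgg ε⟩ with he
    have hstep : ∀ ε : Fin n → Bool, sgn (e ε i) * sgn (e ε k) = -(sgn (ε i) * sgn (ε k)) := by
      intro ε
      have h1 : e ε i = !ε i := by simp [he]
      have h2 : e ε k = ε k := by
        simp [he, Function.update_of_ne (fun hc : k = i => h (hc ▸ rfl))]
      rw [h1, h2]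
      cases ε i <;> cases ε k <;> norm_num [sgn]
    have hself : ∑ ε : Fin n → Bool, sgn (ε i) * sgn (ε k)
        = -∑ ε : Fin n → Bool, sgn (ε i) * sgn (ε k) := by
      conv_lhs => rw [← Equiv.sum_comp e (fun ε => sgn (ε i) * sgn (ε k))]
      rw [← Finset.sum_neg_distrib]
      exact Finset.sum_congr rfl fun ε _ => hstep ε
    linarith

lemma tensor_norm_sum_le {n : ℕ} (N : Tensor3 n → ℝ) (hN : IsTensorNorm N)
    {ι : Type*} (s : Finset ι) (f : ι → Tensor3 n) :
    N (∑ w ∈ s, f w) ≤ ∑ w ∈ s, N (f w) := by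
  have hN0 : N 0 = 0 := by
    have h := hN.1 0 0
    simpa using h
  classical
  induction s using Finset.induction with
  | empty => simp [hN0]
  | @insert x s hx ih =>
    rw [Finset.sum_insert hx, Finset.sum_insert hx]
    exact le_trans (hN.2.1 _ _) (by linarith)


/-- if `N` is a `K`-tensor-symmetric norm on `ℝⁿ ⊗ ℝⁿ ⊗ ℝⁿ`,
`α, β ∈ (0,1)`, `K ≥ 1`, and `x = Σ a_{i,j,k} eᵢ ⊗ eⱼ ⊗ e_k` satisfies
`|a_{π(i),σ(i),τ(i)}| ≥ α` for all `i ∈ {1,…,⌈βn⌉}` and some permutations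
`π, σ, τ`, then `N x ≥ (αβ/K) N(Σᵢ eᵢ ⊗ eᵢ ⊗ eᵢ)`. -/
theorem tensorSymmetric_lower_bound {n : ℕ} (K α β : ℝ)
    (hK : 1 ≤ K) (hα : 0 < α) (hα1 : α < 1) (hβ : 0 < β) (hβ1 : β < 1)
    (N : Tensor3 n → ℝ) (hN : IsTensorNorm N) (hsym : IsTensorSymmetric K N)
    (a : Tensor3 n) (π σ τ : Equiv.Perm (Fin n))
    (hbig : ∀ i : Fin n, (i : ℕ) < ⌈β * n⌉₊ → α ≤ |a (π i) (σ i) (τ i)|) :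
    α * β / K * N (diagTensor n) ≤ N a := by
  have hN0 : N 0 = 0 := by
    have h := hN.1 0 0
    simpa using h
  have hNneg : ∀ x, 0 ≤ N x := by
    intro x
    have h1 : N (x + (-1 : ℝ) • x) ≤ N x + N ((-1:ℝ) • x) := hN.2.1 _ _
    have h2 : N ((-1:ℝ) • x) = N x := by rw [hN.1]; simp
    have h3 : x + (-1:ℝ) • x = 0 := by module
    rw [h3, hN0, h2] at h1
    linarith
  have hK0 : (0:ℝ) < K := lt_of_lt_of_le one_pos hK
  rcases Nat.eq_zero_or_pos n with hn | hn
  · subst hn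
    have ha0 : a = (0 : Tensor3 0) := funext fun i => i.elim0
    have hd0 : diagTensor 0 = (0 : Tensor3 0) := funext fun i => i.elim0
    rw [ha0, hd0, hN0]
    simp
  haveI : NeZero n := ⟨hn.ne'⟩
  set m := ⌈β * (n:ℝ)⌉₊ with hm
  set d : Fin n → ℝ := fun i => a (π i) (σ i) (τ i) with hddef
  set b : Fin n → Bool := fun l => decide (0 ≤ d l) with hbdef
  have hub : ∀ l, sgn (b l) * d l = |d l| := by
    intro l
    by_cases h : 0 ≤ d l
    · simp [hbdef, sgn, h, abs_of_nonneg h]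
    · simp [hbdef, sgn, h, abs_of_neg (lt_of_not_ge h)]
  set W := ((Fin n → Bool) × (Fin n → Bool) × Fin n) with hW
  set T : W → Tensor3 n := fun w => fun i j k =>
    sgn (w.1 i == b (i + w.2.2)) * sgn (w.2.1 j) * sgn (w.1 k == w.2.1 k) *
      a (π (i + w.2.2)) (σ (j + w.2.2)) (τ (k + w.2.2)) with hT
  -- each copy has norm at most K * N a
  have hTbound : ∀ w : W, N (T w) ≤ K * N a := by
    rintro ⟨ε, δ, t⟩
    have h := hsym ((Equiv.addRight t).trans π) ((Equiv.addRight t).trans σ)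
      ((Equiv.addRight t).trans τ)
      (fun i => ε i == b (i + t)) δ (fun k => ε k == δ k) a
    simpa [hT, Equiv.trans_apply, Equiv.coe_addRight] using h
  -- the sum of all copies is a positive multiple of the diagonal tensor
  have hSum : ∑ w : W, T w = ((4:ℝ)^n * ∑ l, |d l|) • diagTensor n := by
    funext i j k
    have happ : (∑ w : W, T w) i j k = ∑ w : W, T w i j k := by
      rw [Finset.sum_apply, Finset.sum_apply, Finset.sum_apply]
    rw [happ]
    have hsplit : ∑ w : W, T w i j k =
        ∑ ε : Fin n → Bool, ∑ δ : Fin n → Bool, ∑ t : Fin n,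
          sgn (ε i == b (i + t)) * sgn (δ j) * sgn (ε k == δ k) *
            a (π (i + t)) (σ (j + t)) (τ (k + t)) := by
      rw [Fintype.sum_prod_type]
      refine Finset.sum_congr rfl fun ε _ => ?_
      rw [Fintype.sum_prod_type]
    rw [hsplit]
    have hstep : ∀ ε : Fin n → Bool, ∀ δ : Fin n → Bool, ∀ t : Fin n,
        sgn (ε i == b (i + t)) * sgn (δ j) * sgn (ε k == δ k) *
            a (π (i + t)) (σ (j + t)) (τ (k + t)) =
        (sgn (ε i) * sgn (ε k)) * ((sgn (δ j) * sgn (δ k)) *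
            (sgn (b (i + t)) * a (π (i + t)) (σ (j + t)) (τ (k + t)))) := by
      intro ε δ t
      rw [sgn_beq, sgn_beq]; ring
    calc
      ∑ ε : Fin n → Bool, ∑ δ : Fin n → Bool, ∑ t : Fin n,
          sgn (ε i == b (i + t)) * sgn (δ j) * sgn (ε k == δ k) *
            a (π (i + t)) (σ (j + t)) (τ (k + t))
        = ∑ ε : Fin n → Bool, ∑ δ : Fin n → Bool, ∑ t : Fin n,
            (sgn (ε i) * sgn (ε k)) * ((sgn (δ j) * sgn (δ k)) *
              (sgn (b (i + t)) * a (π (i + t)) (σ (j + t)) (τ (k + t)))) := by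
          refine Finset.sum_congr rfl fun ε _ => Finset.sum_congr rfl fun δ _ =>
            Finset.sum_congr rfl fun t _ => hstep ε δ t
      _ = (∑ ε : Fin n → Bool, sgn (ε i) * sgn (ε k)) *
            ((∑ δ : Fin n → Bool, sgn (δ j) * sgn (δ k)) *
              (∑ t : Fin n, sgn (b (i + t)) * a (π (i + t)) (σ (j + t)) (τ (k + t)))) := by
          rw [Finset.sum_mul]
          refine Finset.sum_congr rfl fun ε _ => ?_
          rw [Finset.sum_mul_sum, Finset.mul_sum]
          refine Finset.sum_congr rfl fun δ _ => ?_
          rw [Finset.mul_sum]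
      _ = ((4:ℝ)^n * ∑ l, |d l|) • diagTensor n i j k := by
          rw [sum_sgn_pair, sum_sgn_pair]
          by_cases hik : i = k
          · by_cases hjk : j = k
            · rw [if_pos hik, if_pos hjk]
              have hji : j = i := hjk.trans hik.symm
              have hki : k = i := hik.symm
              rw [hji, hki]
              have hdiag : ∑ t : Fin n, sgn (b (i + t)) * a (π (i + t)) (σ (i + t)) (τ (i + t))
                  = ∑ l, |d l| := by
                have h0 : ∀ t : Fin n, sgn (b (i + t)) * a (π (i + t)) (σ (i + t)) (τ (i + t))
                    = |d (i + t)| := fun t => hub (i + t)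
                rw [Finset.sum_congr rfl fun t _ => h0 t]
                exact Fintype.sum_equiv (Equiv.addLeft i) _ _ (fun t => by simp)
              rw [hdiag]
              have h4 : (4:ℝ)^n = (2:ℝ)^n * (2:ℝ)^n := by
                rw [← mul_pow]; norm_num
              simp only [diagTensor, and_self, if_true, smul_eq_mul, mul_one, h4]
              ring
            · rw [if_neg hjk]
              have : diagTensor n i j k = 0 := by
                simp [diagTensor, hjk]
              simp [this]
          · rw [if_neg hik]
            have : diagTensor n i j k = 0 := by
              have : ¬(i = j ∧ j = k) := by
                rintro ⟨rfl, rfl⟩; exact hik rfl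
              simp [diagTensor, this]
            simp [this]
  -- combine
  have hcardW : (Fintype.card W : ℝ) = (4:ℝ)^n * n := by
    have : Fintype.card W = 2^n * (2^n * n) := by
      simp [hW, Fintype.card_prod, Fintype.card_fun]
    rw [this]
    push_cast
    rw [show (4:ℝ)^n = (2:ℝ)^n * (2:ℝ)^n by rw [← mul_pow]; norm_num]
    ring
  have hchain : ((4:ℝ)^n * ∑ l, |d l|) * N (diagTensor n) ≤ (4:ℝ)^n * n * (K * N a) := by
    have h1 : N (∑ w : W, T w) ≤ ∑ w : W, N (T w) := tensor_norm_sum_le N hN _ _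
    have h2 : ∑ w : W, N (T w) ≤ ∑ _w : W, K * N a :=
      Finset.sum_le_sum fun w _ => hTbound w
    have h3 : ∑ _w : W, K * N a = (Fintype.card W : ℝ) * (K * N a) := by
      rw [Finset.sum_const, Finset.card_univ, nsmul_eq_mul]
    have h4 : N (∑ w : W, T w) = ((4:ℝ)^n * ∑ l, |d l|) * N (diagTensor n) := by
      rw [hSum, hN.1]
      congr 1
      have hpos : (0:ℝ) ≤ (4:ℝ)^n * ∑ l, |d l| :=
        mul_nonneg (by positivity) (Finset.sum_nonneg fun l _ => abs_nonneg _)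
      exact abs_of_nonneg hpos
    calc ((4:ℝ)^n * ∑ l, |d l|) * N (diagTensor n) = N (∑ w : W, T w) := h4.symm
      _ ≤ ∑ w : W, N (T w) := h1
      _ ≤ (Fintype.card W : ℝ) * (K * N a) := by rw [← h3]; exact h2
      _ = (4:ℝ)^n * n * (K * N a) := by rw [hcardW]
  have hsumd : (∑ l, |d l|) * N (diagTensor n) ≤ (n:ℝ) * (K * N a) := by
    have h4pos : (0:ℝ) < (4:ℝ)^n := by positivity
    nlinarith [hchain]
  -- lower bound on ∑ |d l|
  have hmn : m ≤ n := by
    rw [hm]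
    refine Nat.ceil_le.mpr ?_
    have := mul_le_mul_of_nonneg_right hβ1.le (Nat.cast_nonneg (α := ℝ) n)
    linarith
  have hfilter : (Finset.univ.filter fun l : Fin n => (l:ℕ) < m).card = m := by
    have h : ∀ x ∈ Finset.range m, x < n := fun x hx =>
      lt_of_lt_of_le (Finset.mem_range.mp hx) hmn
    have heq : (Finset.univ.filter fun l : Fin n => (l:ℕ) < m)
        = (Finset.range m).attachFin h := by
      ext l
      simp [Finset.mem_attachFin]
    rw [heq, Finset.card_attachFin, Finset.card_range]
  have hlow : α * (m:ℝ) ≤ ∑ l, |d l| := by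
    calc α * (m:ℝ) = ∑ _l ∈ (Finset.univ.filter fun l : Fin n => (l:ℕ) < m), α := by
          rw [Finset.sum_const, hfilter, nsmul_eq_mul]; ring
      _ ≤ ∑ l ∈ (Finset.univ.filter fun l : Fin n => (l:ℕ) < m), |d l| := by
          refine Finset.sum_le_sum fun l hl => ?_
          exact hbig l (by simpa using (Finset.mem_filter.mp hl).2)
      _ ≤ ∑ l, |d l| := Finset.sum_le_sum_of_subset_of_nonneg (Finset.filter_subset _ _)
          (fun l _ _ => abs_nonneg _)
  have hβn : α * β * (n:ℝ) ≤ ∑ l, |d l| := by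
    have h1 : β * (n:ℝ) ≤ (m:ℝ) := Nat.le_ceil _
    nlinarith
  have hdiagpos : 0 ≤ N (diagTensor n) := hNneg _
  have hnpos : (0:ℝ) < (n:ℝ) := Nat.cast_pos.mpr hn
  have hfinal : α * β * (n:ℝ) * N (diagTensor n) ≤ (n:ℝ) * (K * N a) := by
    calc α * β * (n:ℝ) * N (diagTensor n) ≤ (∑ l, |d l|) * N (diagTensor n) := by
          exact mul_le_mul_of_nonneg_right hβn hdiagpos
      _ ≤ (n:ℝ) * (K * N a) := hsumd
  rw [div_mul_eq_mul_div, div_le_iff₀ hK0]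
  nlinarith [hfinal]
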